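/- arXiv:1309.5461 — 5 statements merged into one kernel-verified Lean document; each statement's English description precedes it below -/
import Mathlib

section
/- For any finite simple graph G admitting a 3-tuple dominating set, the domination numbers satisfy γ₂(G) ≤ γ_LR(G) ≤ γ₃(G), where γ₂, γ_LR, γ₃ are the minimum sizes of a double dominating set, a liar's dominating set, and a triple dominating set respectively. -/
def closedNbr {V : Type*} (G : SimpleGraph V) (v : V) : Set V :=
  insert v (G.neighborSet v)

def IsKTupleDomSet {V : Type*} (G : SimpleGraph V) (k : ℕ) (D : Set V) : Prop :=
  ∀ v : V, k ≤ (closedNbr G v ∩ D).ncard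

def IsLiarDomSet {V : Type*} (G : SimpleGraph V) (D : Set V) : Prop :=
  (∀ v : V, 2 ≤ (closedNbr G v ∩ D).ncard) ∧
  (∀ u v : V, u ≠ v → 3 ≤ ((closedNbr G u ∪ closedNbr G v) ∩ D).ncard)

noncomputable def gammaK {V : Type*} (G : SimpleGraph V) (k : ℕ) : ℕ :=
  sInf {n : ℕ | ∃ D : Set V, IsKTupleDomSet G k D ∧ D.ncard = n}

noncomputable def gammaLR {V : Type*} (G : SimpleGraph V) : ℕ :=
  sInf {n : ℕ | ∃ D : Set V, IsLiarDomSet G D ∧ D.ncard = n}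

theorem gamma_chain {V : Type*} [Fintype V] (G : SimpleGraph V)
    (h : ∃ D : Set V, IsKTupleDomSet G 3 D) :
    gammaK G 2 ≤ gammaLR G ∧ gammaLR G ≤ gammaK G 3 := by
  obtain ⟨D0, hD0⟩ := h
  have h3LR : ∀ D : Set V, IsKTupleDomSet G 3 D → IsLiarDomSet G D := by
    intro D hD
    constructor
    · intro v; exact le_trans (by norm_num) (hD v)
    · intro u v _
      refine le_trans (hD u) (Set.ncard_le_ncard ?_ (Set.toFinite _))
      exact Set.inter_subset_inter_left _ (Set.subset_union_left)
  have hLR2 : ∀ D : Set V, IsLiarDomSet G D → IsKTupleDomSet G 2 D := by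
    intro D hD v; exact hD.1 v
  constructor
  · refine csInf_le_csInf (OrderBot.bddBelow _) ⟨D0.ncard, D0, h3LR D0 hD0, rfl⟩ ?_
    rintro n ⟨D, hD, rfl⟩
    exact ⟨D, hLR2 D hD, rfl⟩
  · refine csInf_le_csInf (OrderBot.bddBelow _) ⟨D0.ncard, D0, hD0, rfl⟩ ?_
    rintro n ⟨D, hD, rfl⟩
    exact ⟨D, h3LR D hD, rfl⟩
end

section
/- Let G = (V,E) be a finite simple graph and k ≥ 1. Form G' by adding k new vertices u₁,…,u_k, joining every vertex of V to each of u₁,…,u_{k−1}, and joining all pairs among u₁,…,u_k (so {u₁,…,u_k} induces a clique). Then G has a dominating set of size at most p if and only if G' has a k-tuple dominating set of size at most p + k. -/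
def IsDomSet {V : Type*} (G : SimpleGraph V) (D : Set V) : Prop :=
  ∀ v : V, 1 ≤ (closedNbr G v ∩ D).ncard

/-- The graph `G'` of the W[2]-hardness reduction for `k`-tuple domination:
add a clique `u₁,…,u_k` with `u₁,…,u_{k-1}` joined to every original vertex. -/
def kTupleReduction {V : Type*} (G : SimpleGraph V) (k : ℕ) :
    SimpleGraph (V ⊕ Fin k) where
  Adj x y :=
    match x, y with
    | .inl a, .inl b => G.Adj a b
    | .inl _, .inr i => (i : ℕ) < k - 1
    | .inr i, .inl _ => (i : ℕ) < k - 1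
    | .inr i, .inr j => i ≠ j
  symm := by
    constructor
    rintro (a | i) (b | j) h
    · exact h.symm
    · exact h
    · exact h
    · exact h.symm
  loopless := by
    constructor
    rintro (a | i) h
    · exact G.loopless.irrefl a h
    · exact h rfl

lemma closedNbr_inl {V : Type*} (G : SimpleGraph V) (k : ℕ) (a : V) :
    closedNbr (kTupleReduction G k) (Sum.inl a) =
      Sum.inl '' (closedNbr G a) ∪ Sum.inr '' {i : Fin k | (i : ℕ) < k - 1} := by
  ext (b | j) <;>
    simp [closedNbr, kTupleReduction, SimpleGraph.neighborSet]

lemma closedNbr_inr_last {V : Type*} (G : SimpleGraph V) (k : ℕ) (hk : 1 ≤ k) :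
    closedNbr (kTupleReduction G k) (Sum.inr (⟨k - 1, by omega⟩ : Fin k)) =
      Set.range Sum.inr := by
  ext (b | j)
  · simp [closedNbr, kTupleReduction, SimpleGraph.neighborSet]
  · simp only [closedNbr, kTupleReduction, SimpleGraph.neighborSet,
      Set.mem_insert_iff, Set.mem_setOf_eq, Set.mem_range]
    by_cases h : j = (⟨k - 1, by omega⟩ : Fin k) <;> simp [h, eq_comm]

lemma ncard_fin_lt (k m : ℕ) (h : m ≤ k) :
    Set.ncard {i : Fin k | (i : ℕ) < m} = m := by
  have : {i : Fin k | (i : ℕ) < m} = (Fin.castLE h) '' Set.univ := by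
    ext i
    simp only [Set.mem_setOf_eq, Set.image_univ, Set.mem_range]
    constructor
    · intro hi; exact ⟨⟨i, hi⟩, by ext; simp⟩
    · rintro ⟨j, rfl⟩; simp
  rw [this, Set.ncard_image_of_injective _ (Fin.castLE_injective h)]
  simp [Set.ncard_univ]

theorem kTuple_reduction_correct {V : Type*} [Fintype V] (G : SimpleGraph V)
    (k : ℕ) (hk : 1 ≤ k) (p : ℕ) :
    (∃ D : Set V, IsDomSet G D ∧ D.ncard ≤ p) ↔
      (∃ D' : Set (V ⊕ Fin k),
        IsKTupleDomSet (kTupleReduction G k) k D' ∧ D'.ncard ≤ p + k) := by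
  constructor
  · rintro ⟨D, hD, hDcard⟩
    refine ⟨Sum.inl '' D ∪ Set.range Sum.inr, ?_, ?_⟩
    · rintro (a | i)
      · -- closed nbhd contains inl '' (closedNbr G a ∩ D) ∪ inr '' {i | i < k-1}
        have hsub : Sum.inl '' (closedNbr G a ∩ D) ∪
            Sum.inr '' {i : Fin k | (i : ℕ) < k - 1} ⊆
            closedNbr (kTupleReduction G k) (Sum.inl a) ∩
              (Sum.inl '' D ∪ Set.range Sum.inr) := by
          rw [closedNbr_inl]
          rintro x (⟨b, ⟨hb1, hb2⟩, rfl⟩ | ⟨i, hi, rfl⟩)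
          · exact ⟨Or.inl ⟨b, hb1, rfl⟩, Or.inl ⟨b, hb2, rfl⟩⟩
          · exact ⟨Or.inr ⟨i, hi, rfl⟩, Or.inr ⟨i, rfl⟩⟩
        have hdisj : Disjoint (Sum.inl '' (closedNbr G a ∩ D))
            (Sum.inr '' {i : Fin k | (i : ℕ) < k - 1}) := by
          rw [Set.disjoint_iff_forall_ne]
          rintro _ ⟨b, _, rfl⟩ _ ⟨i, _, rfl⟩
          simp
        have hcard := Set.ncard_le_ncard hsub (Set.toFinite _)
        rw [Set.ncard_union_eq hdisj (Set.toFinite _) (Set.toFinite _),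
          Set.ncard_image_of_injective _ Sum.inl_injective,
          Set.ncard_image_of_injective _ Sum.inr_injective,
          ncard_fin_lt k (k - 1) (by omega)] at hcard
        have := hD a
        omega
      · -- all k inr vertices are in D' and in the closed nbhd of inr i
        have hsub : Set.range (Sum.inr : Fin k → V ⊕ Fin k) ⊆
            closedNbr (kTupleReduction G k) (Sum.inr i) ∩
              (Sum.inl '' D ∪ Set.range Sum.inr) := by
          rintro _ ⟨j, rfl⟩
          refine ⟨?_, Or.inr ⟨j, rfl⟩⟩
          by_cases h : j = i
          · simp [closedNbr, h]
          · exact Or.inr (Ne.symm h)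
        have hcard := Set.ncard_le_ncard hsub (Set.toFinite _)
        have : (Set.range (Sum.inr : Fin k → V ⊕ Fin k)).ncard = k := by
          rw [← Set.image_univ, Set.ncard_image_of_injective _ Sum.inr_injective]
          simp [Set.ncard_univ]
        omega
    · have hdisj : Disjoint (Sum.inl '' D) (Set.range (Sum.inr : Fin k → V ⊕ Fin k)) := by
        rw [Set.disjoint_iff_forall_ne]
        rintro _ ⟨b, _, rfl⟩ _ ⟨i, rfl⟩
        simp
      rw [Set.ncard_union_eq hdisj (Set.toFinite _) (Set.toFinite _),
        Set.ncard_image_of_injective _ Sum.inl_injective,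
        ← Set.image_univ, Set.ncard_image_of_injective _ Sum.inr_injective]
      simp only [Set.ncard_univ, Nat.card_eq_fintype_card, Fintype.card_fin]
      omega
  · rintro ⟨D', hD', hD'card⟩
    -- all inr vertices are in D'
    have hinr : Set.range (Sum.inr : Fin k → V ⊕ Fin k) ⊆ D' := by
      have h1 := hD' (Sum.inr (⟨k - 1, by omega⟩ : Fin k))
      rw [closedNbr_inr_last G k hk] at h1
      have hrc : (Set.range (Sum.inr : Fin k → V ⊕ Fin k)).ncard = k := by
        rw [← Set.image_univ, Set.ncard_image_of_injective _ Sum.inr_injective]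
        simp [Set.ncard_univ]
      have heq : Set.range (Sum.inr : Fin k → V ⊕ Fin k) ∩ D' =
          Set.range Sum.inr :=
        Set.eq_of_subset_of_ncard_le Set.inter_subset_left (by omega)
          (Set.toFinite _)
      intro x hx
      rw [← heq] at hx
      exact hx.2
    refine ⟨Sum.inl ⁻¹' D', ?_, ?_⟩
    · intro a
      have h1 := hD' (Sum.inl a)
      rw [closedNbr_inl] at h1
      rw [Set.union_inter_distrib_right] at h1
      have hle := Set.ncard_union_le (Sum.inl '' closedNbr G a ∩ D')
        (Sum.inr '' {i : Fin k | (i : ℕ) < k - 1} ∩ D')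
      have h2 : (Sum.inr '' {i : Fin k | (i : ℕ) < k - 1} ∩ D').ncard ≤ k - 1 := by
        calc (Sum.inr '' {i : Fin k | (i : ℕ) < k - 1} ∩ D').ncard
            ≤ (Sum.inr '' {i : Fin k | (i : ℕ) < k - 1}).ncard :=
              Set.ncard_le_ncard Set.inter_subset_left (Set.toFinite _)
          _ = k - 1 := by
              rw [Set.ncard_image_of_injective _ Sum.inr_injective,
                ncard_fin_lt k (k - 1) (by omega)]
      have h3 : 0 < (Sum.inl '' closedNbr G a ∩ D').ncard := by omega
      rw [Set.ncard_pos (Set.toFinite _)] at h3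
      obtain ⟨x, ⟨b, hb, rfl⟩, hxD⟩ := h3
      have hne : (closedNbr G a ∩ Sum.inl ⁻¹' D').Nonempty := ⟨b, hb, hxD⟩
      have := (Set.ncard_pos (Set.toFinite _)).mpr hne
      omega
    · have hsplit : D' = (Sum.inl '' (Sum.inl ⁻¹' D')) ∪ Set.range Sum.inr := by
        ext (b | j)
        · simp only [Set.mem_union, Set.mem_image, Set.mem_preimage, Set.mem_range]
          constructor
          · intro h; exact Or.inl ⟨b, h, rfl⟩
          · rintro (⟨c, hc, hcb⟩ | ⟨j, hj⟩)
            · cases hcb; exact hc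
            · exact absurd hj (by simp)
        · simp only [Set.mem_union, Set.mem_image, Set.mem_range]
          constructor
          · intro _; exact Or.inr ⟨j, rfl⟩
          · intro _; exact hinr ⟨j, rfl⟩
      have hdisj : Disjoint (Sum.inl '' (Sum.inl ⁻¹' D'))
          (Set.range (Sum.inr : Fin k → V ⊕ Fin k)) := by
        rw [Set.disjoint_iff_forall_ne]
        rintro _ ⟨b, _, rfl⟩ _ ⟨i, rfl⟩
        simp
      rw [hsplit, Set.ncard_union_eq hdisj (Set.toFinite _) (Set.toFinite _),
        Set.ncard_image_of_injective _ Sum.inl_injective,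
        ← Set.image_univ, Set.ncard_image_of_injective _ Sum.inr_injective] at hD'card
      simp only [Set.ncard_univ, Nat.card_eq_fintype_card, Fintype.card_fin] at hD'card
      omega
end

section
/- In the liar's domination reduction graph G' (obtained from G by adding u, u', v, v', w with u, v adjacent to all of V and edges uu', vv', wu, wv), every liar's dominating set of G' contains all four vertices u, u', v, v'. -/
/-- Ordered adjacency among the five new vertices `u = 0`, `u' = 1`, `v = 2`,
`v' = 3`, `w = 4`: edges `uu'`, `vv'`, `wu`, `wv`. -/
def newAdj (i j : Fin 5) : Prop :=
  (i = 0 ∧ j = 1) ∨ (i = 2 ∧ j = 3) ∨ (i = 4 ∧ j = 0) ∨ (i = 4 ∧ j = 2)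

def liarReduction {V : Type*} (G : SimpleGraph V) : SimpleGraph (V ⊕ Fin 5) where
  Adj x y :=
    match x, y with
    | .inl a, .inl b => G.Adj a b
    | .inl _, .inr i => i = 0 ∨ i = 2
    | .inr i, .inl _ => i = 0 ∨ i = 2
    | .inr i, .inr j => newAdj i j ∨ newAdj j i
  symm := ⟨by
    rintro (a | i) (b | j) h
    · exact h.symm
    · exact h
    · exact h
    · exact h.symm⟩
  loopless := ⟨by
    rintro (a | i) h
    · exact G.irrefl h
    · rcases h with h | h <;>
        rcases h with ⟨h1, h2⟩ | ⟨h1, h2⟩ | ⟨h1, h2⟩ | ⟨h1, h2⟩ <;>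
        subst h1 <;> simp_all⟩

lemma pair_of_ncard {α : Type*} {a b : α} {D : Set α} (h : 2 ≤ (({a, b} : Set α) ∩ D).ncard) :
    a ∈ D ∧ b ∈ D := by
  by_contra hc
  push_neg at hc
  rcases Classical.em (a ∈ D) with ha | ha
  · have hb := hc ha
    have hsub : ({a, b} : Set α) ∩ D ⊆ {a} := by
      rintro x ⟨hx1 | hx1, hx2⟩ <;> simp_all
    have := Set.ncard_le_ncard hsub (Set.finite_singleton a)
    rw [Set.ncard_singleton] at this
    omega
  · have hsub : ({a, b} : Set α) ∩ D ⊆ {b} := by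
      rintro x ⟨hx1 | hx1, hx2⟩ <;> simp_all
    have := Set.ncard_le_ncard hsub (Set.finite_singleton b)
    rw [Set.ncard_singleton] at this
    omega

lemma nbr_one {V : Type*} (G : SimpleGraph V) :
    closedNbr (liarReduction G) (Sum.inr 1) = ({Sum.inr 1, Sum.inr 0} : Set (V ⊕ Fin 5)) := by
  ext x
  rcases x with a | i
  · simp [closedNbr, SimpleGraph.neighborSet, liarReduction]
  · simp [closedNbr, SimpleGraph.neighborSet, liarReduction, newAdj]

lemma nbr_three {V : Type*} (G : SimpleGraph V) :
    closedNbr (liarReduction G) (Sum.inr 3) = ({Sum.inr 3, Sum.inr 2} : Set (V ⊕ Fin 5)) := by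
  ext x
  rcases x with a | i
  · simp [closedNbr, SimpleGraph.neighborSet, liarReduction]
  · simp [closedNbr, SimpleGraph.neighborSet, liarReduction, newAdj]

theorem liar_reduction_contains_four {V : Type*} [Fintype V] (G : SimpleGraph V)
    (D' : Set (V ⊕ Fin 5)) (hD' : IsLiarDomSet (liarReduction G) D') :
    Sum.inr 0 ∈ D' ∧ Sum.inr 1 ∈ D' ∧ Sum.inr 2 ∈ D' ∧ Sum.inr 3 ∈ D' := by
  have h1 := hD'.1 (Sum.inr 1)
  rw [nbr_one] at h1
  have h3 := hD'.1 (Sum.inr 3)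
  rw [nbr_three] at h3
  obtain ⟨hu', hu⟩ := pair_of_ncard h1
  obtain ⟨hv', hv⟩ := pair_of_ncard h3
  exact ⟨hu, hu', hv, hv'⟩
end

section
/- Let G = (V,E) be a finite simple graph with V = {v₁,…,v_n}. Form G' by attaching to each v_i a pendant path v_i–x_i–y_i–z_i (adding 3n new vertices). Then every liar's dominating set of G' contains x_i, y_i, and z_i for every i. -/
/-- The graph `G'` obtained from `G` by attaching to each vertex `v` a pendant
path `v – xᵥ – yᵥ – zᵥ`, where `xᵥ = (v,0)`, `yᵥ = (v,1)`, `zᵥ = (v,2)`. -/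
def pendantPaths {V : Type*} (G : SimpleGraph V) : SimpleGraph (V ⊕ V × Fin 3) where
  Adj x y :=
    match x, y with
    | .inl a, .inl b => G.Adj a b
    | .inl a, .inr (b, i) => a = b ∧ i = 0
    | .inr (a, i), .inl b => a = b ∧ i = 0
    | .inr (a, i), .inr (b, j) => a = b ∧ ((i : ℕ) + 1 = (j : ℕ) ∨ (j : ℕ) + 1 = (i : ℕ))
  symm := by
    constructor
    rintro (a | ⟨a, i⟩) (b | ⟨b, j⟩) h
    · exact h.symm
    · exact ⟨h.1.symm, h.2⟩
    · exact ⟨h.1.symm, h.2⟩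
    · exact ⟨h.1.symm, h.2.symm⟩
  loopless := by
    constructor
    rintro (a | ⟨a, i⟩) h
    · exact G.loopless.irrefl a h
    · omega
  -- note: in the last case `h : a = a ∧ (i+1 = i ∨ i+1 = i)`

lemma union_nbr_eq {V : Type*} (G : SimpleGraph V) (v : V) :
    closedNbr (pendantPaths G) (Sum.inr (v, 1)) ∪
      closedNbr (pendantPaths G) (Sum.inr (v, 2)) =
    {Sum.inr (v, 0), Sum.inr (v, 1), Sum.inr (v, 2)} := by
  ext w
  rcases w with a | ⟨a, i⟩
  · simp [closedNbr, SimpleGraph.neighborSet, pendantPaths]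
  · simp only [closedNbr, SimpleGraph.neighborSet, pendantPaths, Set.mem_union,
      Set.mem_insert_iff, Set.mem_setOf_eq, Set.mem_singleton_iff,
      Sum.inr.injEq, Prod.mk.injEq]
    fin_cases i <;> simp [Fin.ext_iff, eq_comm]

theorem pendant_vertices_in_liar_dom {V : Type*} [Fintype V] [DecidableEq V]
    (G : SimpleGraph V) (D : Set (V ⊕ V × Fin 3))
    (hD : IsLiarDomSet (pendantPaths G) D) :
    ∀ (v : V) (i : Fin 3), Sum.inr (v, i) ∈ D := by
  intro v i
  have hne : (Sum.inr (v, 1) : V ⊕ V × Fin 3) ≠ Sum.inr (v, 2) := by simp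
  have h3 := hD.2 _ _ hne
  rw [union_nbr_eq] at h3
  set S : Set (V ⊕ V × Fin 3) :=
    {Sum.inr (v, 0), Sum.inr (v, 1), Sum.inr (v, 2)} with hS
  have hfin : S.Finite := (Set.finite_singleton _).insert _ |>.insert _
  have hcard : S.ncard = 3 := by
    rw [hS]
    rw [Set.ncard_insert_of_notMem (by simp) ((Set.finite_singleton _).insert _),
      Set.ncard_insert_of_notMem (by simp) (Set.finite_singleton _),
      Set.ncard_singleton]
  have hsub : S ∩ D ⊆ S := Set.inter_subset_left
  have heq : S ∩ D = S := by
    apply Set.eq_of_subset_of_ncard_le hsub _ hfin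
    omega
  have hSD : S ⊆ D := by
    intro w hw
    have : w ∈ S ∩ D := by rw [heq]; exact hw
    exact this.2
  apply hSD
  fin_cases i <;> simp [hS]
end

section
/- Let D be a liar's dominating set of a finite simple graph G and let u, v ∈ D be distinct. Then the set S of vertices x ∉ D with N[x] ∩ D ⊆ {u, v} contains at most one element. -/
theorem liar_dom_few_privately_dominated {V : Type*} [Fintype V]
    (G : SimpleGraph V) (D : Set V) (hD : IsLiarDomSet G D)
    (u v : V) (hu : u ∈ D) (hv : v ∈ D) (huv : u ≠ v) :
    ({x : V | x ∉ D ∧ closedNbr G x ∩ D ⊆ {u, v}}).ncard ≤ 1 := by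
  by_contra h
  push_neg at h
  obtain ⟨a, b, ha, hb, hab⟩ := (Set.one_lt_ncard_iff (Set.toFinite _)).mp h
  have h3 := hD.2 a b hab
  have hsub : (closedNbr G a ∪ closedNbr G b) ∩ D ⊆ ({u, v} : Set V) := by
    rintro z ⟨hz | hz, hzD⟩
    · exact ha.2 ⟨hz, hzD⟩
    · exact hb.2 ⟨hz, hzD⟩
  have h2 : ((closedNbr G a ∪ closedNbr G b) ∩ D).ncard ≤ 2 := by
    calc _ ≤ ({u, v} : Set V).ncard := Set.ncard_le_ncard hsub (Set.toFinite _)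
    _ = 2 := Set.ncard_pair huv
  omega
end
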